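/- arXiv:2509.21326 — 2 statements merged into one kernel-verified Lean document; each statement's English description precedes it below -/
import Mathlib

section
/- Let P be continuous and a > 0. Then the MACD identity holds: P̄^a(x) − P̄^{2a}(x) = (a/2)·(d/dx) P̄^{a,a}(x), i.e., the difference of the a-window and 2a-window right-endpoint averages equals (a/2) times the derivative of the doubly averaged signal. -/
open MeasureTheory

noncomputable def mavg (P : ℝ → ℝ) (t x : ℝ) : ℝ := (1 / t) * ∫ s in (x - t)..x, P s


noncomputable def davg (P : ℝ → ℝ) (a x : ℝ) : ℝ := (1 / a) * ∫ s in (x - a)..x, mavg P a s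

/-!
Since `P̄^a` is continuous, the fundamental theorem of calculus gives
`d/dx P̄^{a,a}(x) = (P̄^a(x) - P̄^a(x - a)) / a`. Splitting `[x - 2a, x]` at `x - a` gives
`P̄^{2a}(x) = (P̄^a(x) + P̄^a(x - a)) / 2`, and eliminating `P̄^a(x - a)` yields the identity.
-/

section WindowIntegral

variable {f : ℝ → ℝ}

theorem integral_window_eq_sub (hf : ∀ u v, IntervalIntegrable f volume u v) (t y : ℝ) :
    ∫ s in (y - t)..y, f s = (∫ s in (0 : ℝ)..y, f s) - ∫ s in (0 : ℝ)..(y - t), f s :=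
  (intervalIntegral.integral_interval_sub_left (hf _ _) (hf _ _)).symm

theorem continuous_integral_window (hf : ∀ u v, IntervalIntegrable f volume u v) (t : ℝ) :
    Continuous fun y => ∫ s in (y - t)..y, f s := by
  have hF := intervalIntegral.continuous_primitive hf 0
  simp only [integral_window_eq_sub hf t]
  exact hF.sub (hF.comp (continuous_sub_right t))

theorem hasDerivAt_integral_window (hf : Continuous f) (t x : ℝ) :
    HasDerivAt (fun y => ∫ s in (y - t)..y, f s) (f x - f (x - t)) x := by
  have hF (y : ℝ) : HasDerivAt (fun u => ∫ s in (0 : ℝ)..u, f s) (f y) y :=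
    (hf.integral_hasStrictDerivAt 0 y).hasDerivAt
  have hshift : HasDerivAt (fun y => ∫ s in (0 : ℝ)..(y - t), f s) (f (x - t)) x := by
    simpa using (hF (x - t)).comp_sub_const x t
  simp only [integral_window_eq_sub hf.intervalIntegrable t]
  exact (hF x).sub hshift

end WindowIntegral

section MovingAverage

variable {P : ℝ → ℝ}

theorem continuous_mavg (hP : ∀ u v, IntervalIntegrable P volume u v) (t : ℝ) :
    Continuous (mavg P t) :=
  continuous_const.mul (continuous_integral_window hP t)

theorem hasDerivAt_davg (hP : ∀ u v, IntervalIntegrable P volume u v) (a x : ℝ) :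
    HasDerivAt (davg P a) ((1 / a) * (mavg P a x - mavg P a (x - a))) x :=
  (hasDerivAt_integral_window (continuous_mavg hP a) a x).const_mul (1 / a)

theorem mavg_two_mul (hP : ∀ u v, IntervalIntegrable P volume u v) (a x : ℝ) :
    mavg P (2 * a) x = (mavg P a x + mavg P a (x - a)) / 2 := by
  have hsplit : ∫ s in (x - 2 * a)..x, P s
      = (∫ s in (x - a - a)..(x - a), P s) + ∫ s in (x - a)..x, P s := by
    rw [intervalIntegral.integral_add_adjacent_intervals (hP _ _) (hP _ _)]
    ring_nf
  simp only [mavg, hsplit]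
  ring

end MovingAverage

theorem stmt6_general (P : ℝ → ℝ) (hP : Continuous P) (a : ℝ) (x : ℝ) :
    HasDerivAt (davg P a) ((2 / a) * (mavg P a x - mavg P (2 * a) x)) x := by
  have hInt : ∀ u v, IntervalIntegrable P volume u v := hP.intervalIntegrable
  convert hasDerivAt_davg hInt a x using 1
  rw [mavg_two_mul hInt]
  ring

theorem stmt6 (P : ℝ → ℝ) (hP : Continuous P) (a : ℝ) (ha : 0 < a) (x : ℝ) :
    HasDerivAt (davg P a) ((2 / a) * (mavg P a x - mavg P (2 * a) x)) x :=
  stmt6_general P hP a x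
end

section
/- Let P be continuous and a > 0. Then P̄^a(x) − P̄^{2a}(x) = (a/2)·(d/dy P̃^{a,a})(y)|_{y = x − a}, where P̃^{a,a} = C_a(C_a P) is the double centered average; i.e., MACD equals (a/2) times the derivative of the double phase-corrected average, evaluated with delay a. -/
open MeasureTheory

noncomputable def cavg (P : ℝ → ℝ) (a x : ℝ) : ℝ := (1 / a) * ∫ s in (x - a / 2)..(x + a / 2), P s

/-!
Writing `F` for a primitive of `P`, both averages are difference quotients of `F`:
`P̄^t(x) = (F x - F (x - t)) / t` and `C_a P (y) = (F (y + a/2) - F (y - a/2)) / a`.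
Hence `(C_a (C_a P))' (y) = (F (y + a) - 2 F y + F (y - a)) / a²`, and at `y = x - a` this
second difference is `2 a (P̄^a(x) - P̄^{2a}(x))` by pure algebra.
-/

noncomputable def antideriv (Q : ℝ → ℝ) (y : ℝ) : ℝ := ∫ s in (0 : ℝ)..y, Q s

section

variable {Q : ℝ → ℝ} (hQ : Continuous Q)
include hQ

lemma hasDerivAt_antideriv (y : ℝ) : HasDerivAt (antideriv Q) (Q y) y :=
  (hQ.integral_hasStrictDerivAt 0 y).hasDerivAt

lemma integral_eq_antideriv_sub (u v : ℝ) :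
    ∫ s in u..v, Q s = antideriv Q v - antideriv Q u :=
  (intervalIntegral.integral_interval_sub_left (hQ.intervalIntegrable _ _)
    (hQ.intervalIntegrable _ _)).symm

lemma mavg_eq_antideriv (t x : ℝ) :
    mavg Q t x = (1 / t) * (antideriv Q x - antideriv Q (x - t)) := by
  rw [mavg, integral_eq_antideriv_sub hQ]

lemma cavg_eq_antideriv (a : ℝ) :
    cavg Q a = fun y ↦ (1 / a) * (antideriv Q (y + a / 2) - antideriv Q (y - a / 2)) := by
  funext y
  rw [cavg, integral_eq_antideriv_sub hQ]

lemma hasDerivAt_cavg (a y : ℝ) :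
    HasDerivAt (cavg Q a) ((1 / a) * (Q (y + a / 2) - Q (y - a / 2))) y := by
  rw [cavg_eq_antideriv hQ]
  exact (((hasDerivAt_antideriv hQ _).comp_add_const y (a / 2)).sub
    ((hasDerivAt_antideriv hQ _).comp_sub_const y (a / 2))).const_mul _

lemma continuous_cavg (a : ℝ) : Continuous (cavg Q a) :=
  continuous_iff_continuousAt.mpr fun y ↦ (hasDerivAt_cavg hQ a y).continuousAt

lemma hasDerivAt_cavg_cavg (a y : ℝ) :
    HasDerivAt (cavg (cavg Q a) a)
      ((1 / a ^ 2) * (antideriv Q (y + a) - 2 * antideriv Q y + antideriv Q (y - a))) y := by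
  convert hasDerivAt_cavg (continuous_cavg hQ a) a y using 1
  rw [cavg_eq_antideriv hQ]
  ring_nf

end

theorem stmt13_general (P : ℝ → ℝ) (hP : Continuous P) (a : ℝ) (x : ℝ) :
    HasDerivAt (cavg (cavg P a) a)
      ((2 / a) * (mavg P a x - mavg P (2 * a) x)) (x - a) := by
  convert hasDerivAt_cavg_cavg hP a (x - a) using 1
  rw [mavg_eq_antideriv hP, mavg_eq_antideriv hP]
  ring_nf

theorem stmt13 (P : ℝ → ℝ) (hP : Continuous P) (a : ℝ) (ha : 0 < a) (x : ℝ) :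
    HasDerivAt (cavg (cavg P a) a)
      ((2 / a) * (mavg P a x - mavg P (2 * a) x)) (x - a) :=
  stmt13_general P hP a x
end
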